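/- arXiv:2209.14254 — 9 statements merged into one kernel-verified Lean document; each statement's English description precedes it below -/
import Mathlib

section
/- Let p and q1 be real numbers with 0 < p < 1/2 and 0 < q1 ≤ 1, and set r = 1 − q1 − p + 2·q1·p. Suppose π : ℕ → ℝ satisfies: (i) π(1) = p·π(0); (ii) π(Δ+1) = r·π(Δ) for every Δ ≥ 1; and (iii) ∑'_{Δ∈ℕ} π(Δ) = 1 (in the sense of tsum). Then π(0) = (p + q1 − 2·q1·p)/(1 − (1−q1)·(1−2p)), and for every Δ ≥ 1, π(Δ) = r^(Δ−1)·(p² + q1·p − 2·q1·p²)/(1 − (1−q1)·(1−2p)). -/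
/-!
Under (i) and (ii) the tail is geometric, `π (n + 1) = r ^ n * p * π 0`. Since the total mass is
`1 ≠ 0`, `π` is summable and not identically zero, which forces `|r| < 1`; summing the geometric
series turns (iii) into the linear equation `π 0 * (1 + p / (1 - r)) = 1`.
-/

namespace GeometricTail

variable {π : ℕ → ℝ} {a r : ℝ}

theorem apply_succ_eq_pow_mul (h1 : π 1 = a * π 0)
    (h2 : ∀ n : ℕ, 1 ≤ n → π (n + 1) = r * π n) (n : ℕ) :
    π (n + 1) = r ^ n * (a * π 0) := by
  induction n with
  | zero => simpa using h1
  | succ k ih => rw [h2 (k + 1) (by omega), ih]; ring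

theorem tsum_eq_add_tsum_geometric (h1 : π 1 = a * π 0) (h2 : ∀ n : ℕ, 1 ≤ n → π (n + 1) = r * π n)
    (hπ : Summable π) : ∑' n, π n = π 0 + ∑' n : ℕ, r ^ n * (a * π 0) := by
  rw [hπ.tsum_eq_zero_add]
  simp only [apply_succ_eq_pow_mul h1 h2]

theorem apply_zero_eq_div (ha : a ≠ 0) (h1 : π 1 = a * π 0)
    (h2 : ∀ n : ℕ, 1 ≤ n → π (n + 1) = r * π n) (h3 : ∑' n, π n = 1) :
    π 0 = (1 - r) / (1 - r + a) := by
  have hπ : Summable π := by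
    by_contra h
    simp [tsum_eq_zero_of_not_summable h] at h3
  have hsplit := tsum_eq_add_tsum_geometric h1 h2 hπ
  have hπ0 : π 0 ≠ 0 := by
    intro h0
    simp [h0, h3] at hsplit
  have hr : |r| < 1 := by
    have htail : Summable fun n : ℕ => r ^ n * (a * π 0) :=
      ((summable_nat_add_iff 1).mpr hπ).congr (apply_succ_eq_pow_mul h1 h2)
    exact summable_geometric_iff_norm_lt_one.mp
      ((summable_mul_right_iff (mul_ne_zero ha hπ0)).mp htail)
  have hr1 : 1 - r ≠ 0 := by linarith [le_abs_self r]
  rw [tsum_mul_right, tsum_geometric_of_abs_lt_one hr, h3] at hsplit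
  have hmass : π 0 * (1 - r + a) = 1 - r := by
    field_simp at hsplit
    linear_combination -hsplit
  have hD : 1 - r + a ≠ 0 := by
    intro hD
    rw [hD, mul_zero] at hmass
    exact hr1 hmass.symm
  exact eq_div_of_mul_eq hD hmass

end GeometricTail

theorem strong_preemptive_stationary_distribution_general
    (p q1 : ℝ) (hp0 : 0 < p)
    (π : ℕ → ℝ)
    (h1 : π 1 = p * π 0)
    (h2 : ∀ Δ : ℕ, 1 ≤ Δ → π (Δ + 1) = (1 - q1 - p + 2 * q1 * p) * π Δ)
    (h3 : ∑' Δ : ℕ, π Δ = 1) :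
    π 0 = (p + q1 - 2 * q1 * p) / (1 - (1 - q1) * (1 - 2 * p)) ∧
      ∀ Δ : ℕ, 1 ≤ Δ →
        π Δ = (1 - q1 - p + 2 * q1 * p) ^ (Δ - 1) * (p ^ 2 + q1 * p - 2 * q1 * p ^ 2) /
          (1 - (1 - q1) * (1 - 2 * p)) := by
  have hπ0 := GeometricTail.apply_zero_eq_div hp0.ne' h1 h2 h3
  refine ⟨by rw [hπ0]; ring, fun Δ hΔ => ?_⟩
  obtain ⟨n, rfl⟩ : ∃ n, Δ = n + 1 := ⟨Δ - 1, by omega⟩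
  rw [GeometricTail.apply_succ_eq_pow_mul h1 h2, hπ0, Nat.add_sub_cancel]
  ring

/-- Lemma 1: stationary distribution of the AoII under the strong preemptive policy. -/
theorem strong_preemptive_stationary_distribution
    (p q1 : ℝ) (hp0 : 0 < p) (hp2 : p < 1 / 2) (hq10 : 0 < q1) (hq11 : q1 ≤ 1)
    (π : ℕ → ℝ)
    (h1 : π 1 = p * π 0)
    (h2 : ∀ Δ : ℕ, 1 ≤ Δ → π (Δ + 1) = (1 - q1 - p + 2 * q1 * p) * π Δ)
    (h3 : ∑' Δ : ℕ, π Δ = 1) :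
    π 0 = (p + q1 - 2 * q1 * p) / (1 - (1 - q1) * (1 - 2 * p)) ∧
      ∀ Δ : ℕ, 1 ≤ Δ →
        π Δ = (1 - q1 - p + 2 * q1 * p) ^ (Δ - 1) * (p ^ 2 + q1 * p - 2 * q1 * p ^ 2) /
          (1 - (1 - q1) * (1 - 2 * p)) :=
  strong_preemptive_stationary_distribution_general p q1 hp0 π h1 h2 h3
end

section
/- Let p and q1 be real numbers with 0 < p < 1/2 and 0 < q1 ≤ 1, set r = 1 − q1 − p + 2·q1·p, and define π : ℕ → ℝ by π(0) = (p + q1 − 2·q1·p)/(1 − (1−q1)·(1−2p)) and π(Δ) = r^(Δ−1)·(p² + q1·p − 2·q1·p²)/(1 − (1−q1)·(1−2p)) for Δ ≥ 1. Then for all real numbers α ≥ 0 and β ≥ 0, ∑'_{Δ∈ℕ} (α·Δ + β)·π(Δ) = α·p/((p + q1 − 2·q1·p)·(q1 + 2·p − 2·q1·p)) + β. -/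
/-!
Beyond `Δ = 0` the distribution `π` is geometric with ratio `r = 1 - q1 - p + 2 q1 p`, so the
expectation of `αΔ + β` reduces to the sums `∑ r ^ n = 1 / (1 - r)` and
`∑ (n + 1) r ^ n = 1 / (1 - r) ^ 2`. The closed form then drops out of
`p ^ 2 + q1 p - 2 q1 p ^ 2 = p (1 - r)` and `1 - (1 - q1)(1 - 2p) = (1 - r) + p`.
-/
section AffineMomentsOfGeometric

variable {𝕜 : Type*} [NormedField 𝕜] {r : 𝕜}

theorem hasSum_affine_mul_geometric [CompleteSpace 𝕜] (hr : ‖r‖ < 1) (α β : 𝕜) :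
    HasSum (fun n : ℕ ↦ (α * (n + 1) + β) * r ^ n) (α / (1 - r) ^ 2 + β / (1 - r)) := by
  have h1r : 1 - r ≠ 0 := sub_ne_zero.mpr (by rintro rfl; simp at hr)
  have hsum := ((hasSum_coe_mul_geometric_of_norm_lt_one hr).mul_left α).add
    ((hasSum_geometric_of_norm_lt_one hr).mul_left (α + β))
  have hval : α * (r / (1 - r) ^ 2) + (α + β) * (1 - r)⁻¹ = α / (1 - r) ^ 2 + β / (1 - r) := by
    field_simp
    ring
  rw [hval] at hsum
  exact hsum.congr_fun fun n ↦ by ring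

theorem hasSum_affine_mul_of_geometric_tail [CompleteSpace 𝕜] {π : ℕ → 𝕜} {b : 𝕜}
    (hr : ‖r‖ < 1) (hπ : ∀ n : ℕ, π (n + 1) = b * r ^ n) (α β : 𝕜) :
    HasSum (fun Δ : ℕ ↦ (α * Δ + β) * π Δ)
      (β * π 0 + b * (α / (1 - r) ^ 2 + β / (1 - r))) := by
  have htail := (hasSum_affine_mul_geometric hr α β).mul_left b
  have hsum := HasSum.zero_add (f := fun Δ : ℕ ↦ (α * Δ + β) * π Δ)
    (htail.congr_fun fun n ↦ by push_cast; rw [hπ]; ring)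
  simpa only [Nat.cast_zero, mul_zero, zero_add] using hsum

end AffineMomentsOfGeometric

/-- Corollary 1: expected AoII of the strong preemptive policy under a linear time penalty. -/
theorem strong_preemptive_expected_aoii_linear
    (p q1 : ℝ) (hp0 : 0 < p) (hp2 : p < 1 / 2) (hq10 : 0 < q1) (hq11 : q1 ≤ 1)
    (π : ℕ → ℝ)
    (hπ0 : π 0 = (p + q1 - 2 * q1 * p) / (1 - (1 - q1) * (1 - 2 * p)))
    (hπ : ∀ Δ : ℕ, 1 ≤ Δ →
      π Δ = (1 - q1 - p + 2 * q1 * p) ^ (Δ - 1) * (p ^ 2 + q1 * p - 2 * q1 * p ^ 2) /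
        (1 - (1 - q1) * (1 - 2 * p))) :
    ∀ α β : ℝ, 0 ≤ α → 0 ≤ β →
      ∑' Δ : ℕ, (α * (Δ : ℝ) + β) * π Δ =
        α * p / ((p + q1 - 2 * q1 * p) * (q1 + 2 * p - 2 * q1 * p)) + β := by
  intro α β _ _
  set r := 1 - q1 - p + 2 * q1 * p
  set D := 1 - (1 - q1) * (1 - 2 * p)
  -- `1 - r = q1 (1 - p) + p (1 - q1)` and `r = (1 - q1)(1 - p) + q1 p`
  have hr_pos : 0 < 1 - r := by nlinarith
  have hr_nonneg : 0 ≤ r := by nlinarith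
  have hD : D = (1 - r) + p := by ring
  have hD_pos : 0 < D := by linarith
  have hr : ‖r‖ < 1 := by rw [Real.norm_of_nonneg hr_nonneg]; linarith
  have hπ_succ : ∀ n : ℕ, π (n + 1) = (p ^ 2 + q1 * p - 2 * q1 * p ^ 2) / D * r ^ n := fun n ↦ by
    rw [hπ (n + 1) (Nat.le_add_left 1 n), Nat.add_sub_cancel]
    ring
  rw [(hasSum_affine_mul_of_geometric_tail hr hπ_succ α β).tsum_eq, hπ0]
  have hq : q1 + 2 * p - 2 * q1 * p = D := by ring
  have hA : p + q1 - 2 * q1 * p = 1 - r := by ring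
  rw [hq, hA]
  field_simp
  ring
end

section
/- Let tmax be a natural number with tmax ≥ 2, let p be a real number with 0 < p < 1/2, and let q : ℕ → ℝ satisfy 0 ≤ q(t) ≤ 1 for 1 ≤ t ≤ tmax with q(1) > 0. For 1 ≤ t ≤ tmax set 𝒫(t) = (1 − q(t))·(1 − p). Suppose the real numbers π0, Π and the function Π' : ℕ → ℝ satisfy: (i) Π − p·π0 = q(1)·p·Π + ∑_{t=1}^{tmax−1} q(t+1)·p·Π'(t); (ii) Π'(1) = 𝒫(1)·Π; (iii) Π'(t) = 𝒫(t)·Π'(t−1) for 2 ≤ t ≤ tmax−1; and (iv) π0 + Π + ∑_{t=1}^{tmax−1} Π'(t) = 1. Then Π'(t) = (∏_{l=1}^{t} 𝒫(l))·Π for every 1 ≤ t ≤ tmax−1, and Π = 1 / ( 1/p − q(1) − ∑_{t=1}^{tmax−1} q(t+1)·∏_{l=1}^{t} 𝒫(l) + 1 + ∑_{t=1}^{tmax−1} ∏_{l=1}^{t} 𝒫(l) ). -/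
/-!
Unrolling the recurrence (ii)–(iii) makes every `Π'(t)` a known multiple of `Π`. Substituted
into the balance equation (i) and the normalization (iv), this leaves two linear equations in
`π0` and `Π`; eliminating `π0` (multiply (iv) by `p` and add (i)) determines `Π`.
-/

open Finset

theorem eq_prod_Icc_mul_of_eq_mul_pred {M : Type*} [CommMonoid M] {x r : ℕ → M} {c : M} {n : ℕ}
    (h_one : x 1 = r 1 * c) (h_succ : ∀ t, 2 ≤ t → t ≤ n → x t = r t * x (t - 1)) :
    ∀ t, 1 ≤ t → t ≤ n → x t = (∏ l ∈ Icc 1 t, r l) * c := by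
  intro t ht htn
  induction t, ht using Nat.le_induction with
  | base => simpa using h_one
  | succ t ht ih =>
    rw [h_succ (t + 1) (by omega) htn, Nat.add_sub_cancel, ih (by omega),
      prod_Icc_succ_top (by omega), mul_comm _ (r (t + 1)), mul_assoc]

theorem eq_one_div_of_balance_of_normalization {K : Type*} [Field K] {p π₀ x a b c : K}
    (hp : p ≠ 0) (h_balance : x - p * π₀ = c * p * x + p * a * x)
    (h_norm : π₀ + x + b * x = 1) :
    x = 1 / (1 / p - c - a + 1 + b) := by
  have h_mul : x * (1 / p - c - a + 1 + b) = 1 := by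
    field_simp
    linear_combination h_balance + p * h_norm
  exact eq_one_div_of_mul_eq_one_left h_mul

theorem weak_preemptive_stationary_aggregates_general
    (tmax : ℕ) (p : ℝ) (hp0 : 0 < p)
    (q : ℕ → ℝ)
    (π0 Pbig : ℝ) (Pbig' : ℕ → ℝ)
    (h1 : Pbig - p * π0 =
      q 1 * p * Pbig + ∑ t ∈ Finset.Icc 1 (tmax - 1), q (t + 1) * p * Pbig' t)
    (h2 : Pbig' 1 = (1 - q 1) * (1 - p) * Pbig)
    (h3 : ∀ t : ℕ, 2 ≤ t → t ≤ tmax - 1 → Pbig' t = (1 - q t) * (1 - p) * Pbig' (t - 1))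
    (h4 : π0 + Pbig + ∑ t ∈ Finset.Icc 1 (tmax - 1), Pbig' t = 1) :
    (∀ t : ℕ, 1 ≤ t → t ≤ tmax - 1 →
      Pbig' t = (∏ l ∈ Finset.Icc 1 t, (1 - q l) * (1 - p)) * Pbig) ∧
    Pbig = 1 /
      (1 / p - q 1 -
        (∑ t ∈ Finset.Icc 1 (tmax - 1), q (t + 1) * ∏ l ∈ Finset.Icc 1 t, (1 - q l) * (1 - p))
        + 1 + ∑ t ∈ Finset.Icc 1 (tmax - 1), ∏ l ∈ Finset.Icc 1 t, (1 - q l) * (1 - p)) := by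
  have h_prod := eq_prod_Icc_mul_of_eq_mul_pred h2 h3
  refine ⟨h_prod, eq_one_div_of_balance_of_normalization (π₀ := π0) hp0.ne' ?_ ?_⟩
  · rw [h1, mul_sum, sum_mul]
    congr 1
    refine sum_congr rfl fun t ht => ?_
    rw [h_prod t (mem_Icc.1 ht).1 (mem_Icc.1 ht).2]
    ring
  · convert h4 using 2
    rw [sum_mul]
    exact sum_congr rfl fun t ht => (h_prod t (mem_Icc.1 ht).1 (mem_Icc.1 ht).2).symm

/-- Lemma 2: aggregated stationary quantities of the weak preemptive policy. -/
theorem weak_preemptive_stationary_aggregates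
    (tmax : ℕ) (htmax : 2 ≤ tmax) (p : ℝ) (hp0 : 0 < p) (hp2 : p < 1 / 2)
    (q : ℕ → ℝ) (hq : ∀ t : ℕ, 1 ≤ t → t ≤ tmax → 0 ≤ q t ∧ q t ≤ 1) (hq1 : 0 < q 1)
    (π0 Pbig : ℝ) (Pbig' : ℕ → ℝ)
    (h1 : Pbig - p * π0 =
      q 1 * p * Pbig + ∑ t ∈ Finset.Icc 1 (tmax - 1), q (t + 1) * p * Pbig' t)
    (h2 : Pbig' 1 = (1 - q 1) * (1 - p) * Pbig)
    (h3 : ∀ t : ℕ, 2 ≤ t → t ≤ tmax - 1 → Pbig' t = (1 - q t) * (1 - p) * Pbig' (t - 1))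
    (h4 : π0 + Pbig + ∑ t ∈ Finset.Icc 1 (tmax - 1), Pbig' t = 1) :
    (∀ t : ℕ, 1 ≤ t → t ≤ tmax - 1 →
      Pbig' t = (∏ l ∈ Finset.Icc 1 t, (1 - q l) * (1 - p)) * Pbig) ∧
    Pbig = 1 /
      (1 / p - q 1 -
        (∑ t ∈ Finset.Icc 1 (tmax - 1), q (t + 1) * ∏ l ∈ Finset.Icc 1 t, (1 - q l) * (1 - p))
        + 1 + ∑ t ∈ Finset.Icc 1 (tmax - 1), ∏ l ∈ Finset.Icc 1 t, (1 - q l) * (1 - p)) :=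
  weak_preemptive_stationary_aggregates_general tmax p hp0 q π0 Pbig Pbig' h1 h2 h3 h4
end

section
/- Let tmax be a natural number with tmax ≥ 2, let p be a real number with 0 < p < 1/2, and let q : ℕ → ℝ satisfy 0 ≤ q(t) ≤ 1 for 1 ≤ t ≤ tmax. For 1 ≤ t ≤ tmax set 𝒫(t) = (1 − q(t))·(1 − p). Suppose the real numbers Σ, Π and the functions Σ', Π' : ℕ → ℝ satisfy: (i) Σ'(1) − Π'(1) = 𝒫(1)·Σ; (ii) Σ'(t) − Π'(t) = 𝒫(t)·Σ'(t−1) for 2 ≤ t ≤ tmax−1; and (iii) Σ − Π = q(1)·p·Σ + ∑_{t=1}^{tmax−1} q(t+1)·p·Σ'(t). Then Σ = ( Π + ∑_{t=1}^{tmax−1} q(t+1)·p·( ∑_{i=1}^{t} (∏_{j=i+1}^{t} 𝒫(j))·Π'(i) ) ) / ( 1 − q(1)·p − ∑_{t=1}^{tmax−1} q(t+1)·p·∏_{l=1}^{t} 𝒫(l) ), and Σ'(t) = (∏_{l=1}^{t} 𝒫(l))·Σ + ∑_{i=1}^{t} (∏_{j=i+1}^{t} 𝒫(j))·Π'(i)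 for every 1 ≤ t ≤ tmax−1. -/
/-! Equations (i) and (ii) form a first-order linear recurrence in `t`, which unrolls to the
closed form for `Σ(t)`. Substituting it into (iii) leaves a linear equation for `Σ` whose
coefficient is positive: the `t`-th delivery term is at most `p (1 - p) ^ t`, and these
geometric terms sum to `1 - (1 - p) ^ tmax < 1`. -/

open Finset

theorem linear_recurrence_solution {R : Type*} [CommRing R] {a b x : ℕ → R} {x₀ : R} {n : ℕ}
    (h_one : x 1 = a 1 * x₀ + b 1)
    (h_succ : ∀ t, 1 ≤ t → t + 1 ≤ n → x (t + 1) = a (t + 1) * x t + b (t + 1)) :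
    ∀ t, 1 ≤ t → t ≤ n →
      x t = (∏ l ∈ Icc 1 t, a l) * x₀ + ∑ i ∈ Icc 1 t, (∏ j ∈ Icc (i + 1) t, a j) * b i := by
  intro t ht
  induction t, ht using Nat.le_induction with
  | base => intro _; simpa using h_one
  | succ t ht ih =>
    intro htn
    have h_tail : ∀ i ∈ Icc 1 t, (∏ j ∈ Icc (i + 1) (t + 1), a j) * b i =
        a (t + 1) * ((∏ j ∈ Icc (i + 1) t, a j) * b i) := fun i hi => by
      rw [prod_Icc_succ_top (Nat.succ_le_succ (mem_Icc.1 hi).2)]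
      ring
    rw [prod_Icc_succ_top (by omega), sum_Icc_succ_top (by omega), sum_congr rfl h_tail,
      Icc_eq_empty (show ¬t + 1 + 1 ≤ t + 1 by omega), prod_empty, ← mul_sum, h_succ t ht htn,
      ih (by omega)]
    ring

theorem sum_range_mul_geom_lt_one {p : ℝ} (hp1 : p < 1) (n : ℕ) :
    ∑ t ∈ range n, p * (1 - p) ^ t < 1 := by
  have h_geom := mul_neg_geom_sum (1 - p) n
  rw [sub_sub_cancel] at h_geom
  rw [← mul_sum, h_geom]
  linarith [pow_pos (sub_pos.2 hp1) n]

theorem prod_survival_mem_Icc {ι : Type*} {s : Finset ι} {q : ι → ℝ} {p : ℝ}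
    (hq : ∀ l ∈ s, 0 ≤ q l ∧ q l ≤ 1) (hp1 : p ≤ 1) :
    ∏ l ∈ s, (1 - q l) * (1 - p) ∈ Set.Icc 0 ((1 - p) ^ #s) := by
  have h_nonneg : ∀ l ∈ s, 0 ≤ (1 - q l) * (1 - p) := fun l hl =>
    mul_nonneg (by linarith [(hq l hl).2]) (by linarith)
  refine ⟨prod_nonneg h_nonneg, ?_⟩
  rw [← prod_const]
  exact prod_le_prod h_nonneg fun l hl =>
    mul_le_of_le_one_left (by linarith) (by linarith [(hq l hl).1])

theorem one_sub_delivery_sum_pos {m : ℕ} {p : ℝ} (hp0 : 0 ≤ p) (hp1 : p < 1) {q : ℕ → ℝ}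
    (hq : ∀ t, 1 ≤ t → t ≤ m + 1 → 0 ≤ q t ∧ q t ≤ 1) :
    0 < 1 - q 1 * p - ∑ t ∈ Icc 1 m, q (t + 1) * p * ∏ l ∈ Icc 1 t, (1 - q l) * (1 - p) := by
  set f : ℕ → ℝ := fun t => q (t + 1) * p * ∏ l ∈ Icc 1 t, (1 - q l) * (1 - p)
  have h_split : q 1 * p + ∑ t ∈ Icc 1 m, f t = ∑ t ∈ range (m + 1), f t := by
    rw [range_eq_Ico, sum_eq_sum_Ico_succ_bot (by omega), ← Ico_add_one_right_eq_Icc]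
    simp [f]
  have h_term : ∀ t ∈ range (m + 1), f t ≤ p * (1 - p) ^ t := by
    intro t ht
    rw [mem_range] at ht
    obtain ⟨h_prod_nonneg, h_prod_le⟩ := prod_survival_mem_Icc (s := Icc 1 t) (p := p)
      (fun l hl => hq l (mem_Icc.1 hl).1 ((mem_Icc.1 hl).2.trans (by omega))) hp1.le
    rw [Nat.card_Icc, Nat.add_sub_cancel] at h_prod_le
    obtain ⟨hq0, hq1⟩ := hq (t + 1) (by omega) (by omega)
    calc f t ≤ p * ∏ l ∈ Icc 1 t, (1 - q l) * (1 - p) := by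
          simp only [f]; gcongr; exact mul_le_of_le_one_left hp0 hq1
      _ ≤ p * (1 - p) ^ t := by gcongr
  linarith [sum_le_sum h_term, sum_range_mul_geom_lt_one hp1 (m + 1)]

/-- Theorem 1: closed-form first moments for the weak preemptive policy. -/
theorem weak_preemptive_first_moments
    (tmax : ℕ) (htmax : 2 ≤ tmax) (p : ℝ) (hp0 : 0 < p) (hp2 : p < 1 / 2)
    (q : ℕ → ℝ) (hq : ∀ t : ℕ, 1 ≤ t → t ≤ tmax → 0 ≤ q t ∧ q t ≤ 1)
    (Sbig Pbig : ℝ) (Sbig' Pbig' : ℕ → ℝ)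
    (h1 : Sbig' 1 - Pbig' 1 = (1 - q 1) * (1 - p) * Sbig)
    (h2 : ∀ t : ℕ, 2 ≤ t → t ≤ tmax - 1 →
      Sbig' t - Pbig' t = (1 - q t) * (1 - p) * Sbig' (t - 1))
    (h3 : Sbig - Pbig =
      q 1 * p * Sbig + ∑ t ∈ Finset.Icc 1 (tmax - 1), q (t + 1) * p * Sbig' t) :
    Sbig =
      (Pbig + ∑ t ∈ Finset.Icc 1 (tmax - 1), q (t + 1) * p *
          (∑ i ∈ Finset.Icc 1 t, (∏ j ∈ Finset.Icc (i + 1) t, (1 - q j) * (1 - p)) * Pbig' i)) /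
      (1 - q 1 * p - ∑ t ∈ Finset.Icc 1 (tmax - 1),
          q (t + 1) * p * ∏ l ∈ Finset.Icc 1 t, (1 - q l) * (1 - p)) ∧
    ∀ t : ℕ, 1 ≤ t → t ≤ tmax - 1 →
      Sbig' t = (∏ l ∈ Finset.Icc 1 t, (1 - q l) * (1 - p)) * Sbig +
        ∑ i ∈ Finset.Icc 1 t, (∏ j ∈ Finset.Icc (i + 1) t, (1 - q j) * (1 - p)) * Pbig' i := by
  have h_moments := linear_recurrence_solution (a := fun t => (1 - q t) * (1 - p)) (b := Pbig')
    (x := Sbig') (x₀ := Sbig) (n := tmax - 1) (by linarith) fun t ht htn => by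
      have h := h2 (t + 1) (by omega) htn
      rw [Nat.add_sub_cancel] at h
      linarith
  refine ⟨?_, h_moments⟩
  have h_denom := one_sub_delivery_sum_pos (m := tmax - 1) hp0.le (by linarith) (q := q)
    fun t ht htm => hq t ht (by omega)
  have h_sum : ∑ t ∈ Icc 1 (tmax - 1), q (t + 1) * p * Sbig' t =
      (∑ t ∈ Icc 1 (tmax - 1), q (t + 1) * p * ∏ l ∈ Icc 1 t, (1 - q l) * (1 - p)) * Sbig +
      ∑ t ∈ Icc 1 (tmax - 1), q (t + 1) * p *
        ∑ i ∈ Icc 1 t, (∏ j ∈ Icc (i + 1) t, (1 - q j) * (1 - p)) * Pbig' i := by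
    rw [sum_mul, ← sum_add_distrib]
    refine sum_congr rfl fun t ht => ?_
    rw [h_moments t (mem_Icc.1 ht).1 (mem_Icc.1 ht).2]
    ring
  rw [eq_div_iff h_denom.ne']
  linear_combination h3 + h_sum
end

section
/- Let S be a finite type. Let P_A, P_B : S → S → ℝ, let π_B : S → ℝ satisfy π_B(s) ≥ 0 for all s, ∑_{s∈S} π_B(s) = 1, and ∑_{s∈S} π_B(s)·P_B(s,s') = π_B(s') for every s' ∈ S. Let C_A, C_B, V_A, V_B : S → ℝ and θ_A, θ_B ∈ ℝ satisfy the Bellman equations V_A(s) + θ_A = C_A(s) + ∑_{s'} P_A(s,s')·V_A(s') and V_B(s) + θ_B = C_B(s) + ∑_{s'} P_B(s,s')·V_B(s') for every s ∈ S. Assume the improvement inequality C_A(s) + ∑_{s'} P_A(s,s')·V_A(s') ≤ C_B(s) + ∑_{s'} P_B(s,s')·V_A(s') holds for every s ∈ S. Then θ_A ≤ θ_B. -/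
/-!
Averaging a Bellman (in)equality `V + θ ≤ C + P V` against a stationary distribution `π` of `P`
cancels the relative values, since `π` is invariant under `P`, and leaves `θ ≤ ∑ π C`; for a
Bellman equation this is an equality. The improvement inequality says that the value function
of `A` is a Bellman subsolution for the costs and transitions of `B`, so
`θ_A ≤ ∑ π_B C_B = θ_B`.
-/

open Finset Matrix

section Stationary

variable {S R : Type*} [Fintype S]

theorem sum_mul_sum_mul_eq_of_stationary [CommSemiring R] {P : S → S → R} {π : S → R}
    (hπ : ∀ s' : S, ∑ s : S, π s * P s s' = π s') (f : S → R) :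
    ∑ s : S, π s * ∑ s' : S, P s s' * f s' = ∑ s : S, π s * f s := by
  have hvecMul : π ᵥ* Matrix.of P = π := funext hπ
  calc ∑ s : S, π s * ∑ s' : S, P s s' * f s'
      = π ⬝ᵥ (Matrix.of P *ᵥ f) := rfl
    _ = π ⬝ᵥ f := by rw [dotProduct_mulVec, hvecMul]

variable [CommRing R] {P : S → S → R} {π : S → R}

theorem sum_mul_bellman_residual_of_stationary (hπnorm : ∑ s : S, π s = 1)
    (hπ : ∀ s' : S, ∑ s : S, π s * P s s' = π s') (C V : S → R) (θ : R) :
    ∑ s : S, π s * (C s + ∑ s' : S, P s s' * V s' - (V s + θ)) = ∑ s : S, π s * C s - θ := by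
  simp only [mul_sub, mul_add, sum_sub_distrib, sum_add_distrib, ← sum_mul, hπnorm, one_mul,
    sum_mul_sum_mul_eq_of_stationary hπ]
  ring

variable {C V : S → R} {θ : R}

theorem eq_sum_mul_of_bellman (hπnorm : ∑ s : S, π s = 1)
    (hπ : ∀ s' : S, ∑ s : S, π s * P s s' = π s')
    (hbell : ∀ s : S, V s + θ = C s + ∑ s' : S, P s s' * V s') :
    θ = ∑ s : S, π s * C s := by
  have hresidual := sum_mul_bellman_residual_of_stationary hπnorm hπ C V θ
  simp only [hbell, sub_self, mul_zero, sum_const_zero] at hresidual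
  exact (sub_eq_zero.mp hresidual.symm).symm

theorem le_sum_mul_of_bellman_le [PartialOrder R] [IsOrderedRing R]
    (hπnonneg : ∀ s : S, 0 ≤ π s) (hπnorm : ∑ s : S, π s = 1)
    (hπ : ∀ s' : S, ∑ s : S, π s * P s s' = π s')
    (hbell : ∀ s : S, V s + θ ≤ C s + ∑ s' : S, P s s' * V s') :
    θ ≤ ∑ s : S, π s * C s := by
  have hresidual : 0 ≤ ∑ s : S, π s * (C s + ∑ s' : S, P s s' * V s' - (V s + θ)) :=
    sum_nonneg fun s _ => mul_nonneg (hπnonneg s) (sub_nonneg.mpr (hbell s))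
  rw [sum_mul_bellman_residual_of_stationary hπnorm hπ] at hresidual
  exact sub_nonneg.mp hresidual

end Stationary

/-- Theorem 3 (policy improvement theorem) for a finite-state MDP. -/
theorem policy_improvement_theorem
    {S : Type*} [Fintype S]
    (PA PB : S → S → ℝ) (πB : S → ℝ)
    (hπBnonneg : ∀ s : S, 0 ≤ πB s)
    (hπBnorm : ∑ s : S, πB s = 1)
    (hπBstat : ∀ s' : S, ∑ s : S, πB s * PB s s' = πB s')
    (CA CB VA VB : S → ℝ) (θA θB : ℝ)
    (hbellA : ∀ s : S, VA s + θA = CA s + ∑ s' : S, PA s s' * VA s')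
    (hbellB : ∀ s : S, VB s + θB = CB s + ∑ s' : S, PB s s' * VB s')
    (himpr : ∀ s : S,
      CA s + ∑ s' : S, PA s s' * VA s' ≤ CB s + ∑ s' : S, PB s s' * VA s') :
    θA ≤ θB := by
  have hsubsolution : ∀ s : S, VA s + θA ≤ CB s + ∑ s' : S, PB s s' * VA s' :=
    fun s => (hbellA s).le.trans (himpr s)
  calc θA ≤ ∑ s : S, πB s * CB s :=
        le_sum_mul_of_bellman_le hπBnonneg hπBnorm hπBstat hsubsolution
    _ = θB := (eq_sum_mul_of_bellman hπBnorm hπBstat hbellB).symm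
end

section
/- Let U be a finite type, let γ be a real number with 0 < γ < 1, and let f : ℕ → ℝ be nondecreasing. For each action a ∈ {0,1}, let R_a, S_a : U → U → ℝ be nonnegative with ∑_{u'∈U} (R_a(u,u') + S_a(u,u')) = 1 for every u ∈ U, and let R⁰_a, S⁰_a : U → U → ℝ be nonnegative with ∑_{u'∈U} (R⁰_a(u,u') + S⁰_a(u,u')) = 1 for every u ∈ U. Define the value-iteration sequence V_ν : ℕ × U → ℝ by V_0 ≡ 0, and for all ν: V_{ν+1}(Δ,u) = min_{a∈{0,1}} { f(Δ) + γ·∑_{u'∈U} [ R_a(u,u')·V_ν(Δ+1,u') + S_a(u,u')·V_ν(0,u') ] } for Δ ≥ 1, and V_{ν+1}(0,u) = min_{a∈{0,1}} { f(0) + γ·∑_{u'∈U} [ R⁰_a(u,u')·V_ν(1,u') + S⁰_a(u,u')·V_ν(0,u') ] }. Then for every ν, every u ∈ U, and all natural numbers Δ1 ≥ Δ2 ≥ 1, one has V_ν(Δ1,u) ≥ V_ν(Δ2,u). -/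
open Finset Set

/- The transition from `(Δ, u)` with `Δ ≥ 1` lands in `(Δ + 1, u')` or `(0, u')` with weights that do
not depend on `Δ`. So if the previous iterate is nondecreasing on `Δ ≥ 1`, each action's backup is a
nondecreasing cost plus a nonnegative combination of nondecreasing terms and a constant; a minimum
of nondecreasing functions is nondecreasing, and the claim follows by induction on the iteration. -/

theorem add_mul_sum_weighted_le_of_le {U : Type*} [Fintype U] {γ : ℝ} (hγ : 0 ≤ γ)
    {r s : U → ℝ} (hr : ∀ u', 0 ≤ r u') {c c' : ℝ} (hc : c ≤ c') {x x' z : U → ℝ}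
    (hx : x ≤ x') :
    c + γ * ∑ u', (r u' * x u' + s u' * z u') ≤ c' + γ * ∑ u', (r u' * x' u' + s u' * z u') := by
  gcongr with u' _
  · exact hr u'
  · exact hx u'

theorem monotoneOn_Ici_one_of_bellman {U : Type*} [Fintype U] {γ : ℝ} (hγ : 0 ≤ γ)
    {f : ℕ → ℝ} (hf : Monotone f) {R S : Fin 2 → U → U → ℝ} (hR : ∀ a u u', 0 ≤ R a u u')
    {W W' : ℕ → U → ℝ} (hW : ∀ u, MonotoneOn (W · u) (Ici 1))
    (hW' : ∀ Δ u, 1 ≤ Δ → W' Δ u =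
      min (f Δ + γ * ∑ u' : U, (R 0 u u' * W (Δ + 1) u' + S 0 u u' * W 0 u'))
          (f Δ + γ * ∑ u' : U, (R 1 u u' * W (Δ + 1) u' + S 1 u u' * W 0 u')))
    (u : U) : MonotoneOn (W' · u) (Ici 1) := by
  intro Δ₂ h₂ Δ₁ h₁ h₂₁
  have hnext : (W (Δ₂ + 1) ·) ≤ (W (Δ₁ + 1) ·) := fun u' =>
    hW u' (by simp) (by simp) (by omega)
  simp only [hW' Δ₂ u h₂, hW' Δ₁ u h₁]
  exact min_le_min (add_mul_sum_weighted_le_of_le hγ (hR 0 u) (hf h₂₁) hnext)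
    (add_mul_sum_weighted_le_of_le hγ (hR 1 u) (hf h₂₁) hnext)

theorem value_iteration_monotone_in_aoii_general
    {U : Type*} [Fintype U] (γ : ℝ) (hγ0 : 0 < γ)
    (f : ℕ → ℝ) (hf : Monotone f)
    (R S : Fin 2 → U → U → ℝ)
    (hRnonneg : ∀ a u u', 0 ≤ R a u u')
    (V : ℕ → ℕ → U → ℝ)
    (hV0 : ∀ Δ u, V 0 Δ u = 0)
    (hVpos : ∀ ν Δ u, 1 ≤ Δ → V (ν + 1) Δ u =
      min (f Δ + γ * ∑ u' : U, (R 0 u u' * V ν (Δ + 1) u' + S 0 u u' * V ν 0 u'))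
          (f Δ + γ * ∑ u' : U, (R 1 u u' * V ν (Δ + 1) u' + S 1 u u' * V ν 0 u'))) :
    ∀ (ν : ℕ) (u : U) (Δ1 Δ2 : ℕ), 1 ≤ Δ2 → Δ2 ≤ Δ1 → V ν Δ2 u ≤ V ν Δ1 u := by
  have hmono : ∀ ν u, MonotoneOn (V ν · u) (Ici 1) := by
    intro ν
    induction ν with
    | zero => simp [hV0, monotoneOn_const]
    | succ ν ih => exact monotoneOn_Ici_one_of_bellman hγ0.le hf hRnonneg ih (hVpos ν)
  intro ν u Δ1 Δ2 h2 h21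
  exact hmono ν u h2 (mem_Ici.2 (h2.trans h21)) h21

/-- Lemma 4: every iterate of discounted value iteration is nondecreasing in the AoII value. -/
theorem value_iteration_monotone_in_aoii
    {U : Type*} [Fintype U] (γ : ℝ) (hγ0 : 0 < γ) (hγ1 : γ < 1)
    (f : ℕ → ℝ) (hf : Monotone f)
    (R S R0 S0 : Fin 2 → U → U → ℝ)
    (hRnonneg : ∀ a u u', 0 ≤ R a u u') (hSnonneg : ∀ a u u', 0 ≤ S a u u')
    (hRS : ∀ a u, ∑ u' : U, (R a u u' + S a u u') = 1)
    (hR0nonneg : ∀ a u u', 0 ≤ R0 a u u') (hS0nonneg : ∀ a u u', 0 ≤ S0 a u u')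
    (hRS0 : ∀ a u, ∑ u' : U, (R0 a u u' + S0 a u u') = 1)
    (V : ℕ → ℕ → U → ℝ)
    (hV0 : ∀ Δ u, V 0 Δ u = 0)
    (hVpos : ∀ ν Δ u, 1 ≤ Δ → V (ν + 1) Δ u =
      min (f Δ + γ * ∑ u' : U, (R 0 u u' * V ν (Δ + 1) u' + S 0 u u' * V ν 0 u'))
          (f Δ + γ * ∑ u' : U, (R 1 u u' * V ν (Δ + 1) u' + S 1 u u' * V ν 0 u')))
    (hVzero : ∀ ν u, V (ν + 1) 0 u =
      min (f 0 + γ * ∑ u' : U, (R0 0 u u' * V ν 1 u' + S0 0 u u' * V ν 0 u'))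
          (f 0 + γ * ∑ u' : U, (R0 1 u u' * V ν 1 u' + S0 1 u u' * V ν 0 u'))) :
    ∀ (ν : ℕ) (u : U) (Δ1 Δ2 : ℕ), 1 ≤ Δ2 → Δ2 ≤ Δ1 → V ν Δ2 u ≤ V ν Δ1 u :=
  value_iteration_monotone_in_aoii_general γ hγ0 f hf R S hRnonneg V hV0 hVpos
end

section
/- Let p, p_s, θ be real numbers with 0 < p < 1/2 and 0 < p_s < 1, and let f : ℕ → ℝ be nondecreasing. Set c = (1 − p_s)·(1 − p) + p_s·p and c' = (1 − p_s)·p + p_s·(1 − p). Define the sequence of functions V_ν : ℕ → ℝ by V_0 ≡ 0, and for all ν: V_{ν+1}(0) = f(0) − θ + (1 − p)·V_ν(0) + p·V_ν(1), and V_{ν+1}(Δ) = f(Δ) − θ + c·V_ν(Δ+1) + c'·V_ν(0) for every Δ ≥ 1. Then for every ν, the function V_ν is nondecreasing on ℕ, i.e., V_ν(Δ) ≤ V_ν(Δ+1) for all Δ ∈ ℕ. -/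
/-!
Induction on `ν`: one step of the recursion preserves monotonicity. For `Δ ≥ 1` the increment
of the new iterate is `f (Δ + 1) - f Δ + c · (V (Δ + 2) - V (Δ + 1))`. At `Δ = 0`, using
`c + c' = 1`, it is `f 1 - f 0 + c · (V 2 - V 1) + (c - p) · (V 1 - V 0)`, and
`c - p = (1 - p_s)(1 - 2p) ≥ 0` is exactly where `p ≤ 1/2` enters.
-/

section PolicyStep

variable {p c c' θ : ℝ} {f W W' : ℕ → ℝ}

theorem policyStep_le_succ_of_pos (hf : Monotone f) (hW : Monotone W) (hc : 0 ≤ c)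
    (hstep : ∀ Δ, 1 ≤ Δ → W' Δ = f Δ - θ + c * W (Δ + 1) + c' * W 0)
    {Δ : ℕ} (hΔ : 1 ≤ Δ) : W' Δ ≤ W' (Δ + 1) := by
  rw [hstep Δ hΔ, hstep (Δ + 1) (by omega)]
  have hfΔ := hf (Nat.le_succ Δ)
  linarith [mul_nonneg hc (sub_nonneg.2 (hW (Nat.le_succ (Δ + 1))))]

theorem policyStep_zero_le_one (hf : Monotone f) (hW : Monotone W) (hc : 0 ≤ c) (hpc : p ≤ c)
    (hcc' : c + c' = 1)
    (hzero : W' 0 = f 0 - θ + (1 - p) * W 0 + p * W 1)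
    (hstep : ∀ Δ, 1 ≤ Δ → W' Δ = f Δ - θ + c * W (Δ + 1) + c' * W 0) :
    W' 0 ≤ W' 1 := by
  obtain rfl : c' = 1 - c := by linarith
  rw [hzero, hstep 1 le_rfl]
  have hf01 := hf (Nat.zero_le 1)
  linarith [mul_nonneg hc (sub_nonneg.2 (hW (Nat.le_succ 1))),
    mul_nonneg (sub_nonneg.2 hpc) (sub_nonneg.2 (hW (Nat.zero_le 1)))]

theorem monotone_policyStep (hf : Monotone f) (hW : Monotone W) (hc : 0 ≤ c) (hpc : p ≤ c)
    (hcc' : c + c' = 1)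
    (hzero : W' 0 = f 0 - θ + (1 - p) * W 0 + p * W 1)
    (hstep : ∀ Δ, 1 ≤ Δ → W' Δ = f Δ - θ + c * W (Δ + 1) + c' * W 0) :
    Monotone W' := by
  refine monotone_nat_of_le_succ fun Δ => ?_
  rcases Nat.eq_zero_or_pos Δ with rfl | hΔ
  · exact policyStep_zero_le_one hf hW hc hpc hcc' hzero hstep
  · exact policyStep_le_succ_of_pos hf hW hc hstep hΔ

end PolicyStep

theorem geometric_policy_evaluation_iterates_monotone_general
    (p ps θ : ℝ) (hp0 : 0 < p) (hp2 : p < 1 / 2) (hps1 : ps < 1)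
    (f : ℕ → ℝ) (hf : Monotone f)
    (V : ℕ → ℕ → ℝ)
    (hV0 : ∀ Δ, V 0 Δ = 0)
    (hVz : ∀ ν, V (ν + 1) 0 = f 0 - θ + (1 - p) * V ν 0 + p * V ν 1)
    (hVp : ∀ ν Δ, 1 ≤ Δ → V (ν + 1) Δ = f Δ - θ +
      ((1 - ps) * (1 - p) + ps * p) * V ν (Δ + 1) +
      ((1 - ps) * p + ps * (1 - p)) * V ν 0) :
    ∀ ν Δ, V ν Δ ≤ V ν (Δ + 1) := by
  have hpc : p ≤ (1 - ps) * (1 - p) + ps * p := by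
    linarith [mul_pos (sub_pos.2 hps1) (by linarith : (0 : ℝ) < 1 - 2 * p)]
  have hmono : ∀ ν, Monotone (V ν) := by
    intro ν
    induction ν with
    | zero => simpa only [funext hV0] using monotone_const
    | succ ν ih =>
      exact monotone_policyStep hf ih (hp0.le.trans hpc) hpc (by ring) (hVz ν) (hVp ν)
  exact fun ν Δ => hmono ν (Nat.le_succ Δ)

/-- Monotonicity of the iterates of the policy-evaluation recursion for the strong
preemptive policy under Geometric delay (property 2 of Lemma 8 in the appendix). -/
theorem geometric_policy_evaluation_iterates_monotone
    (p ps θ : ℝ) (hp0 : 0 < p) (hp2 : p < 1 / 2) (hps0 : 0 < ps) (hps1 : ps < 1)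
    (f : ℕ → ℝ) (hf : Monotone f)
    (V : ℕ → ℕ → ℝ)
    (hV0 : ∀ Δ, V 0 Δ = 0)
    (hVz : ∀ ν, V (ν + 1) 0 = f 0 - θ + (1 - p) * V ν 0 + p * V ν 1)
    (hVp : ∀ ν Δ, 1 ≤ Δ → V (ν + 1) Δ = f Δ - θ +
      ((1 - ps) * (1 - p) + ps * p) * V ν (Δ + 1) +
      ((1 - ps) * p + ps * (1 - p)) * V ν 0) :
    ∀ ν Δ, V ν Δ ≤ V ν (Δ + 1) :=
  geometric_policy_evaluation_iterates_monotone_general p ps θ hp0 hp2 hps1 f hf V hV0 hVz hVp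
end

section
/- Let p, q1, α, β, θ be real numbers with 0 < p < 1/2 and 0 < q1 ≤ 1. Set c = (1 − q1)·(1 − p) + q1·p and c' = (1 − q1)·p + q1·(1 − p). Define the sequence of functions V_ν : ℕ → ℝ by V_0 ≡ 0, and for all ν: V_{ν+1}(0) = β − θ + (1 − p)·V_ν(0) + p·V_ν(1), and V_{ν+1}(Δ) = α·Δ + β − θ + c·V_ν(Δ+1) + c'·V_ν(0) for every Δ ≥ 1. Then for every ν and all natural numbers Δ1, Δ2 ≥ 1, one has V_ν(Δ1+1) − V_ν(Δ1) = V_ν(Δ2+1) − V_ν(Δ2). -/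
/-!
On `Δ ≥ 1` the recursion makes `V (ν + 1) Δ` the sum of an affine function of `Δ`, a term not
depending on `Δ`, and `c · V ν (Δ + 1)`. Hence the first difference of `V (ν + 1)` at `Δ` is
`α + c · (V ν (Δ + 2) - V ν (Δ + 1))`, which is constant as soon as that of `V ν` is, and
`V 0 = 0` starts the induction.
-/

def HasConstFirstDiffFromOne (f : ℕ → ℝ) : Prop :=
  ∀ m n : ℕ, 1 ≤ m → 1 ≤ n → f (m + 1) - f m = f (n + 1) - f n

theorem hasConstFirstDiffFromOne_of_eq_affine_add_mul_shift {f g : ℕ → ℝ} (a b c : ℝ)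
    (hf : ∀ Δ, 1 ≤ Δ → f Δ = a * (Δ : ℝ) + b + c * g (Δ + 1))
    (hg : HasConstFirstDiffFromOne g) : HasConstFirstDiffFromOne f := by
  intro m n hm hn
  rw [hf m hm, hf (m + 1) (by omega), hf n hn, hf (n + 1) (by omega)]
  push_cast
  linear_combination c * hg (m + 1) (n + 1) (by omega) (by omega)

theorem threshold_policy_iterates_constant_first_difference_general
    (p q1 α β θ : ℝ)
    (V : ℕ → ℕ → ℝ)
    (hV0 : ∀ Δ, V 0 Δ = 0)
    (hVp : ∀ ν Δ, 1 ≤ Δ → V (ν + 1) Δ = α * (Δ : ℝ) + β - θ +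
      ((1 - q1) * (1 - p) + q1 * p) * V ν (Δ + 1) +
      ((1 - q1) * p + q1 * (1 - p)) * V ν 0) :
    ∀ (ν : ℕ) (Δ1 Δ2 : ℕ), 1 ≤ Δ1 → 1 ≤ Δ2 →
      V ν (Δ1 + 1) - V ν Δ1 = V ν (Δ2 + 1) - V ν Δ2 := by
  intro ν
  induction ν with
  | zero => intro Δ1 Δ2 _ _; simp [hV0]
  | succ ν ih =>
    refine hasConstFirstDiffFromOne_of_eq_affine_add_mul_shift α
      (β - θ + ((1 - q1) * p + q1 * (1 - p)) * V ν 0) ((1 - q1) * (1 - p) + q1 * p)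
      (fun Δ hΔ => ?_) ih
    rw [hVp ν Δ hΔ]
    ring

/-- Constant first differences of the iterates of the policy-evaluation recursion
for the threshold preemptive policy under a linear time penalty. -/
theorem threshold_policy_iterates_constant_first_difference
    (p q1 α β θ : ℝ) (hp0 : 0 < p) (hp2 : p < 1 / 2) (hq10 : 0 < q1) (hq11 : q1 ≤ 1)
    (V : ℕ → ℕ → ℝ)
    (hV0 : ∀ Δ, V 0 Δ = 0)
    (hVz : ∀ ν, V (ν + 1) 0 = β - θ + (1 - p) * V ν 0 + p * V ν 1)
    (hVp : ∀ ν Δ, 1 ≤ Δ → V (ν + 1) Δ = α * (Δ : ℝ) + β - θ +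
      ((1 - q1) * (1 - p) + q1 * p) * V ν (Δ + 1) +
      ((1 - q1) * p + q1 * (1 - p)) * V ν 0) :
    ∀ (ν : ℕ) (Δ1 Δ2 : ℕ), 1 ≤ Δ1 → 1 ≤ Δ2 →
      V ν (Δ1 + 1) - V ν Δ1 = V ν (Δ2 + 1) - V ν Δ2 :=
  threshold_policy_iterates_constant_first_difference_general p q1 α β θ V hV0 hVp
end

section
/- Let p, q1, α, β, θ, σ be real numbers with 0 < p < 1/2 and 0 < q1 ≤ 1. Set c = (1 − q1)·(1 − p) + q1·p and c' = (1 − q1)·p + q1·(1 − p). Suppose V : ℕ → ℝ satisfies: (i) V(0) = β − θ + (1 − p)·V(0) + p·V(1); (ii) V(Δ) = α·Δ + β − θ + c·V(Δ+1) + c'·V(0) for every Δ ≥ 1; and (iii) V(Δ+1) − V(Δ) = σ for every Δ ≥ 1. Then V(1) − V(0) = (θ − β)/p and σ = α/(q1 + p − 2·q1·p). -/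
/-!
Equation (i) is linear in `V 0, V 1` and gives `p * (V 1 - V 0) = θ - β` directly. For `σ`,
subtracting (ii) at `Δ` from (ii) at `Δ + 1` cancels the constant terms and leaves
`σ = α + c * σ`; the denominator `1 - c = q1 * (1 - p) + p * (1 - q1)` is positive.
-/

lemma sub_eq_div_of_eq_add_mul_sub {p b x y : ℝ} (hp : p ≠ 0)
    (h : x = b + (1 - p) * x + p * y) : y - x = -b / p := by
  rw [eq_div_iff hp]
  linarith

lemma one_sub_mul_eq_of_affine_recurrence {V : ℕ → ℝ} {α b c σ : ℝ}
    (hV : ∀ Δ : ℕ, 1 ≤ Δ → V Δ = α * Δ + b + c * V (Δ + 1))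
    (hσ : ∀ Δ : ℕ, 1 ≤ Δ → V (Δ + 1) - V Δ = σ) :
    (1 - c) * σ = α := by
  have e1 := hV 1 le_rfl
  have e2 := hV 2 (by norm_num)
  have d1 : V 2 - V 1 = σ := hσ 1 le_rfl
  have d2 : V 3 - V 2 = σ := hσ 2 (by norm_num)
  push_cast at e1 e2
  linear_combination e2 - e1 - d1 + c * d2

lemma add_sub_two_mul_mul_pos {p q : ℝ} (hp0 : 0 < p) (hp1 : p < 1) (hq0 : 0 < q) (hq1 : q ≤ 1) :
    0 < q + p - 2 * q * p := by
  nlinarith [mul_pos hq0 (sub_pos.mpr hp1), mul_nonneg hp0.le (sub_nonneg.mpr hq1)]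

/-- Property 4 of the appendix lemma supporting Theorem 6: first difference at zero
and the constant first difference σ of the threshold preemptive policy's value function. -/
theorem threshold_policy_value_function_differences
    (p q1 α β θ σ : ℝ) (hp0 : 0 < p) (hp2 : p < 1 / 2) (hq10 : 0 < q1) (hq11 : q1 ≤ 1)
    (V : ℕ → ℝ)
    (h0 : V 0 = β - θ + (1 - p) * V 0 + p * V 1)
    (h1 : ∀ Δ : ℕ, 1 ≤ Δ → V Δ = α * (Δ : ℝ) + β - θ +
      ((1 - q1) * (1 - p) + q1 * p) * V (Δ + 1) +
      ((1 - q1) * p + q1 * (1 - p)) * V 0)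
    (h2 : ∀ Δ : ℕ, 1 ≤ Δ → V (Δ + 1) - V Δ = σ) :
    V 1 - V 0 = (θ - β) / p ∧ σ = α / (q1 + p - 2 * q1 * p) := by
  refine ⟨by rw [sub_eq_div_of_eq_add_mul_sub hp0.ne' h0, neg_sub], ?_⟩
  have hrec : (1 - ((1 - q1) * (1 - p) + q1 * p)) * σ = α :=
    one_sub_mul_eq_of_affine_recurrence (b := β - θ + ((1 - q1) * p + q1 * (1 - p)) * V 0)
      (fun Δ hΔ => by rw [h1 Δ hΔ]; ring) h2
  have hpos := add_sub_two_mul_mul_pos hp0 (by linarith) hq10 hq11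
  rw [eq_div_iff hpos.ne', ← hrec]
  ring
end
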